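/- Finite-branching characterization of the viability kernel (König-type lemma): if U is a nonempty finite type, then a state x belongs to V if and only if for every K : ℕ there exists a control sequence u : ℕ → U with l (traj x u k) ≥ 0 for all k ≤ K. That is, the viability kernel equals the intersection over all K of the K-step viable sets. -/

import Mathlib

def traj {X U : Type*} (f : X → U → X) (x : X) (u : ℕ → U) : ℕ → X
  | 0 => x
  | k + 1 => f (traj f x u k) (u k)

def viab {X U : Type*} (f : X → U → X) (l : X → ℝ) : Set X :=
  {x | ∃ u : ℕ → U, ∀ k : ℕ, l (traj f x u k) ≥ 0}

/-!
König's lemma for finitely many controls. If `x` can stay safe for every finite horizon, then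
so can one of its finitely many successors `f x a`: otherwise each successor fails at some
horizon `K a`, and `x` would fail at horizon `1 + max K`. The states that are safe for every
horizon therefore form a safe set in which every state has a successor in the set, and following such
successors forever gives a safe infinite control sequence.
-/

def viabUpTo {X U : Type*} (f : X → U → X) (l : X → ℝ) (K : ℕ) : Set X :=
  {x | ∃ u : ℕ → U, ∀ k ≤ K, l (traj f x u k) ≥ 0}

section

variable {X U : Type*} (f : X → U → X)

theorem traj_succ_eq_traj_tail (x : X) (u : ℕ → U) (k : ℕ) :
    traj f x u (k + 1) = traj f (f x (u 0)) (fun n => u (n + 1)) k := by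
  induction k with
  | zero => rfl
  | succ k ih => exact congrArg (f · (u (k + 1))) ih

theorem exists_forall_apply_mem_viabUpTo [Finite U] {l : X → ℝ} {x : X}
    (hx : ∀ K, x ∈ viabUpTo f l K) : ∃ a, ∀ K, f x a ∈ viabUpTo f l K := by
  by_contra! hbad
  choose K hK using hbad
  obtain ⟨M, hM⟩ := Finite.exists_le K
  obtain ⟨u, hu⟩ := hx (M + 1)
  refine hK (u 0) ⟨fun n => u (n + 1), fun k hk => ?_⟩
  rw [← traj_succ_eq_traj_tail]
  exact hu (k + 1) (by grind)

theorem subset_viab_of_forall_exists_apply_mem {l : X → ℝ} {S : Set X}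
    (hl : ∀ y ∈ S, l y ≥ 0) (hS : ∀ y ∈ S, ∃ a, f y a ∈ S) : S ⊆ viab f l := by
  intro x hx
  choose a ha using fun y : S => hS y y.2
  let next : S → S := fun y => ⟨f y (a y), ha y⟩
  let states : ℕ → S := fun n => next^[n] ⟨x, hx⟩
  have traj_eq : ∀ n, traj f x (fun n => a (states n)) n = states n := by
    intro n
    induction n with
    | zero => rfl
    | succ n ih =>
      simp only [traj, ih, states, Function.iterate_succ_apply']
      rfl
  exact ⟨fun n => a (states n), fun n => traj_eq n ▸ hl _ (states n).2⟩

end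

theorem viab_eq_iInter_finite_horizon_general {X U : Type*} [Finite U]
    (f : X → U → X) (l : X → ℝ) (x : X) :
    x ∈ viab f l ↔ ∀ K : ℕ, ∃ u : ℕ → U, ∀ k ≤ K, l (traj f x u k) ≥ 0 := by
  refine ⟨fun ⟨u, hu⟩ K => ⟨u, fun k _ => hu k⟩, fun hx => ?_⟩
  refine subset_viab_of_forall_exists_apply_mem f (S := {y | ∀ K, y ∈ viabUpTo f l K}) ?_ ?_ hx
  · intro y hy
    obtain ⟨u, hu⟩ := hy 0
    exact hu 0 le_rfl
  · exact fun y hy => exists_forall_apply_mem_viabUpTo f hy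

theorem viab_eq_iInter_finite_horizon {X U : Type*} [Nonempty U] [Finite U]
    (f : X → U → X) (l : X → ℝ) (x : X) :
    x ∈ viab f l ↔ ∀ K : ℕ, ∃ u : ℕ → U, ∀ k ≤ K, l (traj f x u k) ≥ 0 :=
  viab_eq_iInter_finite_horizon_general f l x
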